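/- arXiv:2107.06965 — 5 statements merged into one kernel-verified Lean document; each statement's English description precedes it below -/
import Mathlib

section
/- Let u ∈ C²([0,1]) satisfy −u''(x) = f(x) for all x ∈ (0,1) with u(0) = u(1) = 0, where f : [0,1] → ℝ is continuous. Then for every j with 1 ≤ j ≤ n−1, the dual-vector component satisfies ∫₀¹ f(x)φ_j(x) dx = −(1/h_j)·u(x_{j−1}) + (1/h_j + 1/h_{j+1})·u(x_j) − (1/h_{j+1})·u(x_{j+1}). -/
open MeasureTheory

/-- The hat (nodal basis) function `φ_j` associated with the nodes `x`. -/
noncomputable def hatFn (x : ℕ → ℝ) (j : ℕ) : ℝ → ℝ := fun t =>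
  if x (j - 1) ≤ t ∧ t ≤ x j then (t - x (j - 1)) / (x j - x (j - 1))
  else if x j ≤ t ∧ t ≤ x (j + 1) then (x (j + 1) - t) / (x (j + 1) - x j)
  else 0

/-! Integrate by parts on each of the two elements `[x_{j-1}, x_j]` and `[x_j, x_{j+1}]` that
carry the support of `φ_j`: against the linear weight `t - s`, `u''` integrates to
`[u' (t) (t - s) - u (t)]`, and the terms in `u' (x_j)` from the two elements cancel. -/

open Set

theorem integral_mul_sub_of_hasDerivWithinAt {u u' u'' : ℝ → ℝ} {a b : ℝ} {s : Set ℝ}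
    (hab : a ≤ b) (hs : Icc a b ⊆ s)
    (hu : ∀ t ∈ Icc a b, HasDerivWithinAt u (u' t) s t)
    (hu' : ∀ t ∈ Icc a b, HasDerivWithinAt u' (u'' t) s t)
    (hu'' : IntervalIntegrable u'' volume a b) (c : ℝ) :
    ∫ t in a..b, u'' t * (t - c) = u' b * (b - c) - u b - (u' a * (a - c) - u a) := by
  have hcu : ContinuousOn u (Icc a b) := fun t ht => (hu t ht).continuousWithinAt.mono hs
  have hcu' : ContinuousOn u' (Icc a b) := fun t ht => (hu' t ht).continuousWithinAt.mono hs
  have hcont : ContinuousOn (fun t => u' t * (t - c) - u t) (Icc a b) := by fun_prop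
  refine intervalIntegral.integral_eq_sub_of_hasDerivAt_of_le hab hcont (fun t ht => ?_)
    (hu''.mul_continuousOn (g := fun t => t - c) (by fun_prop))
  have hmem : s ∈ nhds t := Filter.mem_of_superset (Icc_mem_nhds ht.1 ht.2) hs
  have hd : HasDerivAt (fun t => u' t * (t - c) - u t) (u'' t * (t - c) + u' t * 1 - u' t) t :=
    (((hu' t (Ioo_subset_Icc_self ht)).hasDerivAt hmem).mul ((hasDerivAt_id' t).sub_const c)).sub
      ((hu t (Ioo_subset_Icc_self ht)).hasDerivAt hmem)
  exact hd.congr_deriv (by ring)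

section HatFn

variable {x : ℕ → ℝ} {j : ℕ} {t : ℝ}

theorem hatFn_eq_max_min (hab : x (j - 1) < x j) (hbc : x j < x (j + 1)) :
    hatFn x j = fun t =>
      max 0 (min ((t - x (j - 1)) / (x j - x (j - 1))) ((x (j + 1) - t) / (x (j + 1) - x j))) := by
  funext t
  have hba : 0 < x j - x (j - 1) := sub_pos.2 hab
  have hcb : 0 < x (j + 1) - x j := sub_pos.2 hbc
  unfold hatFn
  split_ifs with hl hr
  · rw [min_eq_left, max_eq_right (div_nonneg (by linarith [hl.1]) hba.le)]
    rw [div_le_div_iff₀ hba hcb]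
    nlinarith [hl.1, hl.2]
  · rw [min_eq_right, max_eq_right (div_nonneg (by linarith [hr.2]) hcb.le)]
    rw [div_le_div_iff₀ hcb hba]
    nlinarith [hr.1, hr.2]
  · refine (max_eq_left ?_).symm
    rcases lt_or_ge t (x (j - 1)) with h | h
    · exact min_le_of_left_le (div_nonpos_of_nonpos_of_nonneg (by linarith) hba.le)
    · have hct : x (j + 1) < t := by
        by_contra! h'
        rcases le_total t (x j) with h'' | h''
        exacts [hl ⟨h, h''⟩, hr ⟨h'', h'⟩]
      exact min_le_of_right_le (div_nonpos_of_nonpos_of_nonneg (by linarith) hcb.le)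

theorem continuous_hatFn (hab : x (j - 1) < x j) (hbc : x j < x (j + 1)) :
    Continuous (hatFn x j) := by
  rw [hatFn_eq_max_min hab hbc]
  fun_prop

theorem hatFn_eq_zero_of_notMem_Ioo (hab : x (j - 1) < x j) (hbc : x j < x (j + 1))
    (ht : t ∉ Ioo (x (j - 1)) (x (j + 1))) : hatFn x j t = 0 := by
  rw [hatFn_eq_max_min hab hbc]
  beta_reduce
  refine max_eq_left ?_
  rcases not_and_or.1 ht with h | h
  · exact min_le_of_left_le (div_nonpos_of_nonpos_of_nonneg (by linarith) (by linarith))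
  · exact min_le_of_right_le (div_nonpos_of_nonpos_of_nonneg (by linarith) (by linarith))

theorem hatFn_of_mem_Icc_left (ht : t ∈ Icc (x (j - 1)) (x j)) :
    hatFn x j t = (t - x (j - 1)) / (x j - x (j - 1)) :=
  if_pos ht

theorem hatFn_of_mem_Icc_right (hab : x (j - 1) < x j) (hbc : x j < x (j + 1))
    (ht : t ∈ Icc (x j) (x (j + 1))) :
    hatFn x j t = (x (j + 1) - t) / (x (j + 1) - x j) := by
  have hba : 0 < x j - x (j - 1) := sub_pos.2 hab
  have hcb : 0 < x (j + 1) - x j := sub_pos.2 hbc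
  rw [hatFn_eq_max_min hab hbc]
  beta_reduce
  have hright_le_left : (x (j + 1) - t) / (x (j + 1) - x j) ≤ (t - x (j - 1)) / (x j - x (j - 1)) :=
    calc _ ≤ 1 := (div_le_one hcb).2 (by linarith [ht.1])
      _ ≤ _ := (one_le_div hba).2 (by linarith [ht.1])
  rw [min_eq_right hright_le_left, max_eq_right (div_nonneg (by linarith [ht.2]) hcb.le)]

theorem integral_mul_hatFn (hab : x (j - 1) < x j) (hbc : x j < x (j + 1)) {l r : ℝ}
    (hl : l ≤ x (j - 1)) (hr : x (j + 1) ≤ r) {g : ℝ → ℝ} (hg : IntervalIntegrable g volume l r) :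
    ∫ t in l..r, g t * hatFn x j t =
      (∫ t in x (j - 1)..x j, g t * (t - x (j - 1))) / (x j - x (j - 1))
        - (∫ t in x j..x (j + 1), g t * (t - x (j + 1))) / (x (j + 1) - x j) := by
  set a := x (j - 1)
  set b := x j
  set c := x (j + 1)
  have hint : ∀ p q, l ≤ p → p ≤ q → q ≤ r →
      IntervalIntegrable (fun t => g t * hatFn x j t) volume p q := fun p q hlp hpq hqr =>
    (hg.mono_set (uIcc_subset_uIcc (mem_uIcc_of_le hlp (hpq.trans hqr))
      (mem_uIcc_of_le (hlp.trans hpq) hqr))).mul_continuousOn (continuous_hatFn hab hbc).continuousOn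
  have hlb : l ≤ b := hl.trans hab.le
  have hlc : l ≤ c := hlb.trans hbc.le
  have hbr : b ≤ r := hbc.le.trans hr
  have har : a ≤ r := hab.le.trans hbr
  have hzero_left : ∫ t in l..a, g t * hatFn x j t = 0 := by
    refine (intervalIntegral.integral_congr (g := fun _ => 0) fun t ht => ?_).trans (by simp)
    rw [uIcc_of_le hl] at ht
    simp [hatFn_eq_zero_of_notMem_Ioo hab hbc fun h => h.1.not_ge ht.2]
  have hzero_right : ∫ t in c..r, g t * hatFn x j t = 0 := by
    refine (intervalIntegral.integral_congr (g := fun _ => 0) fun t ht => ?_).trans (by simp)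
    rw [uIcc_of_le hr] at ht
    simp [hatFn_eq_zero_of_notMem_Ioo hab hbc fun h => h.2.not_ge ht.1]
  have hleft : ∫ t in a..b, g t * hatFn x j t = (∫ t in a..b, g t * (t - a)) / (b - a) := by
    rw [← intervalIntegral.integral_div]
    refine intervalIntegral.integral_congr fun t ht => ?_
    rw [uIcc_of_le hab.le] at ht
    rw [hatFn_of_mem_Icc_left ht, mul_div_assoc]
  have hright : ∫ t in b..c, g t * hatFn x j t = -(∫ t in b..c, g t * (t - c)) / (c - b) := by
    rw [← intervalIntegral.integral_neg, ← intervalIntegral.integral_div]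
    refine intervalIntegral.integral_congr fun t ht => ?_
    rw [uIcc_of_le hbc.le] at ht
    simp only [hatFn_of_mem_Icc_right hab hbc ht]
    ring
  rw [← intervalIntegral.integral_add_adjacent_intervals (hint l c le_rfl hlc hr) (hint c r hlc hr le_rfl),
    ← intervalIntegral.integral_add_adjacent_intervals (hint l b le_rfl hlb (hbc.le.trans hr))
      (hint b c hlb hbc.le hr),
    ← intervalIntegral.integral_add_adjacent_intervals (hint l a le_rfl hl har) (hint a b hl hab.le hbr),
    hzero_left, hzero_right, hleft, hright]
  ring

theorem integral_deriv2_mul_hatFn (hab : x (j - 1) < x j) (hbc : x j < x (j + 1)) {l r : ℝ}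
    (hl : l ≤ x (j - 1)) (hr : x (j + 1) ≤ r) {u u' u'' : ℝ → ℝ}
    (hu : ∀ t ∈ Icc l r, HasDerivWithinAt u (u' t) (Icc l r) t)
    (hu' : ∀ t ∈ Icc l r, HasDerivWithinAt u' (u'' t) (Icc l r) t)
    (hu'' : IntervalIntegrable u'' volume l r) :
    ∫ t in l..r, u'' t * hatFn x j t =
      (u (x (j - 1)) - u (x j)) / (x j - x (j - 1))
        + (u (x (j + 1)) - u (x j)) / (x (j + 1) - x j) := by
  have hlb : l ≤ x j := hl.trans hab.le
  have hbr : x j ≤ r := hbc.le.trans hr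
  have hsub : ∀ {p q}, l ≤ p → q ≤ r → Icc p q ⊆ Icc l r := fun hp hq => Icc_subset_Icc hp hq
  have hint : ∀ {p q}, l ≤ p → p ≤ q → q ≤ r → IntervalIntegrable u'' volume p q :=
    fun hlp hpq hqr => hu''.mono_set (uIcc_subset_uIcc (mem_uIcc_of_le hlp (hpq.trans hqr))
      (mem_uIcc_of_le (hlp.trans hpq) hqr))
  rw [integral_mul_hatFn hab hbc hl hr hu'',
    integral_mul_sub_of_hasDerivWithinAt hab.le (hsub hl hbr) (fun t ht => hu t (hsub hl hbr ht))
      (fun t ht => hu' t (hsub hl hbr ht)) (hint hl hab.le hbr),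
    integral_mul_sub_of_hasDerivWithinAt hbc.le (hsub hlb hr) (fun t ht => hu t (hsub hlb hr ht))
      (fun t ht => hu' t (hsub hlb hr ht)) (hint hlb hbc.le hr)]
  field_simp [sub_ne_zero.2 hab.ne', sub_ne_zero.2 hbc.ne']
  ring

end HatFn

theorem stmt0_general
    (n : ℕ)
    (x : ℕ → ℝ) (hx0 : x 0 = 0) (hxn : x n = 1)
    (hmono : ∀ i, i < n → x i < x (i + 1))
    (u u' u'' f : ℝ → ℝ)
    (hu1 : ∀ t ∈ Set.Icc (0:ℝ) 1, HasDerivWithinAt u (u' t) (Set.Icc 0 1) t)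
    (hu2 : ∀ t ∈ Set.Icc (0:ℝ) 1, HasDerivWithinAt u' (u'' t) (Set.Icc 0 1) t)
    (hu2c : ContinuousOn u'' (Set.Icc (0:ℝ) 1))
    (hode : ∀ t ∈ Set.Ioo (0:ℝ) 1, -u'' t = f t) :
    ∀ j, 1 ≤ j → j ≤ n - 1 →
      ∫ t in (0:ℝ)..1, f t * hatFn x j t =
        -(1 / (x j - x (j - 1))) * u (x (j - 1))
        + (1 / (x j - x (j - 1)) + 1 / (x (j + 1) - x j)) * u (x j)
        - (1 / (x (j + 1) - x j)) * u (x (j + 1)) := by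
  intro j hj1 hjn
  have hx : StrictMonoOn x (Iic n) := strictMonoOn_Iic_of_lt_succ fun m hm => by simpa using hmono m hm
  have hab : x (j - 1) < x j := hx (by simp; omega) (by simp; omega) (by omega)
  have hbc : x j < x (j + 1) := hx (by simp; omega) (by simp; omega) (by omega)
  have h0a : 0 ≤ x (j - 1) := hx0 ▸ hx.monotoneOn (by simp) (by simp; omega) (by omega)
  have hc1 : x (j + 1) ≤ 1 := hxn ▸ hx.monotoneOn (by simp; omega) (by simp) (by omega)
  have hode_int : ∫ t in (0:ℝ)..1, f t * hatFn x j t = -∫ t in (0:ℝ)..1, u'' t * hatFn x j t := by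
    rw [intervalIntegral.integral_of_le zero_le_one, intervalIntegral.integral_of_le zero_le_one,
      integral_Ioc_eq_integral_Ioo, integral_Ioc_eq_integral_Ioo, ← integral_neg]
    exact setIntegral_congr_fun measurableSet_Ioo fun t ht => by simp [← hode t ht]
  rw [hode_int, integral_deriv2_mul_hatFn hab hbc h0a hc1 hu1 hu2
    (hu2c.intervalIntegrable_of_Icc zero_le_one)]
  field_simp [sub_ne_zero.2 hab.ne', sub_ne_zero.2 hbc.ne']
  ring

theorem stmt0
    (n : ℕ) (hn : 2 ≤ n)
    (x : ℕ → ℝ) (hx0 : x 0 = 0) (hxn : x n = 1)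
    (hmono : ∀ i, i < n → x i < x (i + 1))
    (u u' u'' f : ℝ → ℝ)
    (hu1 : ∀ t ∈ Set.Icc (0:ℝ) 1, HasDerivWithinAt u (u' t) (Set.Icc 0 1) t)
    (hu2 : ∀ t ∈ Set.Icc (0:ℝ) 1, HasDerivWithinAt u' (u'' t) (Set.Icc 0 1) t)
    (hu2c : ContinuousOn u'' (Set.Icc (0:ℝ) 1))
    (hf : ContinuousOn f (Set.Icc (0:ℝ) 1))
    (hode : ∀ t ∈ Set.Ioo (0:ℝ) 1, -u'' t = f t)
    (hubc0 : u 0 = 0) (hubc1 : u 1 = 0) :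
    ∀ j, 1 ≤ j → j ≤ n - 1 →
      ∫ t in (0:ℝ)..1, f t * hatFn x j t =
        -(1 / (x j - x (j - 1))) * u (x (j - 1))
        + (1 / (x j - x (j - 1)) + 1 / (x (j + 1) - x j)) * u (x j)
        - (1 / (x (j + 1) - x j)) * u (x (j + 1)) :=
  stmt0_general n x hx0 hxn hmono u u' u'' f hu1 hu2 hu2c hode
end

section
/- Let u ∈ C²([0,1]) satisfy −u''(x) = f(x) for all x ∈ (0,1) with u(0) = u(1) = 0, where f : [0,1] → ℝ is continuous. Let F ∈ ℝ^{n−1} be the dual vector with components F_j = ∫₀¹ f(x)φ_j(x) dx. Then the vector ũ = (u(x_1), …, u(x_{n−1}))ᵀ is the unique solution of the linear system S ũ = F; in other words, the coefficient vector of the finite element solution of the system S u = F coincides with the vector of nodal values of u (the finite element solution equals the linear interpolant of u). -/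
/-
Integrating `-u'' φ_k` by parts over the two elements of the support of the hat function, the
boundary terms `u'(x_k)` cancel and what is left is the jump of the difference quotients of `u`
at `x_k`, which is row `k` of `S` applied to the nodal values (the boundary values `u(0) = u(1) = 0`
stand in for the missing neighbours of the first and last row). Conversely, `S w = 0` says that the
difference quotients of `w`, extended by zero to the boundary nodes, are all equal, so `w` is affine
in the nodes; vanishing at both ends forces `w = 0`.
-/

open MeasureTheory

/-- The `(n-1) × (n-1)` tridiagonal stiffness matrix; the interior index `i : Fin (n-1)`
corresponds to the node `x (i+1)`, and `h_j = x j - x (j-1)`. -/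
noncomputable def stiff (n : ℕ) (x : ℕ → ℝ) :
    Matrix (Fin (n - 1)) (Fin (n - 1)) ℝ := fun i j =>
  if (i : ℕ) = (j : ℕ) then
    1 / (x ((i : ℕ) + 1) - x (i : ℕ)) + 1 / (x ((i : ℕ) + 2) - x ((i : ℕ) + 1))
  else if (j : ℕ) = (i : ℕ) + 1 then -(1 / (x ((i : ℕ) + 2) - x ((i : ℕ) + 1)))
  else if (i : ℕ) = (j : ℕ) + 1 then -(1 / (x ((i : ℕ) + 1) - x (i : ℕ)))
  else 0

open Set Matrix Function

noncomputable def nodalSlope (x W : ℕ → ℝ) (k : ℕ) : ℝ :=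
  (W (k + 1) - W k) / (x (k + 1) - x k)

lemma Fin.sum_univ_ite_val_eq {M : Type*} [AddCommMonoid M] (N m : ℕ) (c : M) :
    ∑ j : Fin N, (if (j : ℕ) = m then c else 0) = if m < N then c else 0 := by
  rw [Fin.sum_univ_eq_sum_range (fun k => if k = m then c else 0) N, Finset.sum_ite_eq']
  simp only [Finset.mem_range]

lemma stiff_mulVec_apply (n : ℕ) (x W : ℕ → ℝ) (hW0 : W 0 = 0) (hWn : W n = 0)
    (i : Fin (n - 1)) :
    (stiff n x *ᵥ fun j : Fin (n - 1) => W (j + 1)) i =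
      nodalSlope x W i - nodalSlope x W (i + 1) := by
  obtain ⟨i, hi⟩ := i
  have hrow : ∀ j : Fin (n - 1), stiff n x ⟨i, hi⟩ j * W (j + 1) =
      (if (j : ℕ) = i then (1 / (x (i + 1) - x i) + 1 / (x (i + 2) - x (i + 1))) * W (i + 1)
        else 0)
      + (if (j : ℕ) = i + 1 then -(1 / (x (i + 2) - x (i + 1))) * W (i + 2) else 0)
      + (if (j : ℕ) = i - 1 then -(1 / (x (i + 1) - x i)) * W i else 0) := by
    rintro ⟨j, hj⟩
    simp only [stiff]
    -- for `i = 0` the truncated index `i - 1` is `0` again; the extra term vanishes as `W 0 = 0`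
    split_ifs <;> subst_vars <;>
      first | omega | (ring_nf; done) | (obtain rfl : j = 0 := (by omega); simp [hW0])
  simp only [mulVec, dotProduct, hrow, Finset.sum_add_distrib, Fin.sum_univ_ite_val_eq,
    if_pos hi, if_pos (show i - 1 < n - 1 by omega), nodalSlope, add_assoc, Nat.reduceAdd]
  by_cases hlast : i + 1 < n - 1
  · rw [if_pos hlast]
    ring
  · rw [if_neg hlast, show i + 2 = n by omega, hWn]
    ring

noncomputable def extendByZero (n : ℕ) (v : Fin (n - 1) → ℝ) (k : ℕ) : ℝ :=
  if h : 0 < k ∧ k < n then v ⟨k - 1, by omega⟩ else 0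

lemma extendByZero_succ (n : ℕ) (v : Fin (n - 1) → ℝ) :
    (fun j : Fin (n - 1) => extendByZero n v (j + 1)) = v := by
  ext ⟨j, hj⟩
  simp only [extendByZero, dif_pos (show 0 < j + 1 ∧ j + 1 < n by omega), Nat.add_sub_cancel]

lemma eq_add_mul_of_nodalSlope_eq {n : ℕ} {x W : ℕ → ℝ} {C : ℝ}
    (hx : ∀ k < n, x k ≠ x (k + 1)) (hslope : ∀ k < n, nodalSlope x W k = C) :
    ∀ k ≤ n, W k = W 0 + C * (x k - x 0) := by
  intro k hk
  induction k with
  | zero => ring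
  | succ k ih =>
    have hstep : W (k + 1) = W k + nodalSlope x W k * (x (k + 1) - x k) := by
      rw [nodalSlope, div_mul_cancel₀ _ (sub_ne_zero.mpr (hx k (by omega)).symm)]
      ring
    rw [hstep, ih (by omega), hslope k (by omega)]
    ring

lemma eq_zero_of_stiff_mulVec_eq_zero {n : ℕ} {x : ℕ → ℝ} (hx : ∀ k < n, x k < x (k + 1))
    {v : Fin (n - 1) → ℝ} (hv : stiff n x *ᵥ v = 0) : v = 0 := by
  set W := extendByZero n v
  have hW0 : W 0 = 0 := by simp [W, extendByZero]
  have hWn : W n = 0 := by simp [W, extendByZero]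
  rw [← extendByZero_succ n v] at hv ⊢
  have hstep : ∀ k, k + 1 < n → nodalSlope x W (k + 1) = nodalSlope x W k := by
    intro k hk
    have := congrFun hv ⟨k, by omega⟩
    rw [stiff_mulVec_apply n x W hW0 hWn] at this
    simp only [Pi.zero_apply] at this
    linarith
  have hconst : ∀ k < n, nodalSlope x W k = nodalSlope x W 0 := by
    intro k hk
    induction k with
    | zero => rfl
    | succ k ih => rw [hstep k hk, ih (by omega)]
  have haffine := eq_add_mul_of_nodalSlope_eq (fun k hk => (hx k hk).ne) hconst
  ext ⟨j, hj⟩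
  have hpos : x 0 < x n :=
    strictMonoOn_Iic_of_lt_succ hx (by simp) (by simp) (by omega : 0 < n)
  have hslope0 : nodalSlope x W 0 = 0 := by
    have := haffine n le_rfl
    rw [hW0, hWn, zero_add, zero_eq_mul] at this
    exact this.resolve_right (sub_ne_zero.mpr hpos.ne')
  change W (j + 1) = 0
  rw [haffine (j + 1) (by omega), hW0, hslope0]
  ring

lemma stiff_mulVec_injective {n : ℕ} {x : ℕ → ℝ} (hx : ∀ k < n, x k < x (k + 1)) :
    Injective (stiff n x *ᵥ ·) := by
  intro v w hvw
  rw [← sub_eq_zero]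
  apply eq_zero_of_stiff_mulVec_eq_zero hx
  simp only [mulVec_sub, hvw, sub_self]

lemma integral_neg_secondDeriv_mul_affine {u u' u'' ψ : ℝ → ℝ} {a b α : ℝ} (hab : a ≤ b)
    (hu : ∀ t ∈ Icc a b, HasDerivWithinAt u (u' t) (Icc a b) t)
    (hu' : ∀ t ∈ Icc a b, HasDerivWithinAt u' (u'' t) (Icc a b) t)
    (hu'' : ContinuousOn u'' (Icc a b)) (hψ : ∀ t, HasDerivAt ψ α t) :
    ∫ t in a..b, -u'' t * ψ t = u' a * ψ a - u' b * ψ b + α * (u b - u a) := by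
  have hψc : Continuous ψ := continuous_iff_continuousAt.mpr fun t => (hψ t).continuousAt
  have huc : ContinuousOn u (Icc a b) := fun t ht => (hu t ht).continuousWithinAt
  have hu'c : ContinuousOn u' (Icc a b) := fun t ht => (hu' t ht).continuousWithinAt
  have hcont : ContinuousOn (fun t => α * u t - u' t * ψ t) (Icc a b) :=
    (continuousOn_const.mul huc).sub (hu'c.mul hψc.continuousOn)
  have hderiv : ∀ t ∈ Ioo a b,
      HasDerivWithinAt (fun t => α * u t - u' t * ψ t) (-u'' t * ψ t) (Ioi t) t := by
    intro t ht
    have hnhds : Icc a b ∈ nhds t := Icc_mem_nhds ht.1 ht.2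
    have hut := (hu t (Ioo_subset_Icc_self ht)).hasDerivAt hnhds
    have hu't := (hu' t (Ioo_subset_Icc_self ht)).hasDerivAt hnhds
    exact ((hut.const_mul α).sub (hu't.mul (hψ t))).hasDerivWithinAt.congr_deriv (by ring)
  have hint : IntervalIntegrable (fun t => -u'' t * ψ t) volume a b :=
    (hu''.neg.mul hψc.continuousOn).intervalIntegrable_of_Icc hab
  rw [intervalIntegral.integral_eq_sub_of_hasDeriv_right_of_le hab hcont hderiv hint]
  ring

section hatFn

variable {x : ℕ → ℝ} {k : ℕ} {t : ℝ}

lemma hatFn_succ_of_le (h₁ : x k < x (k + 1)) (ht : t ≤ x k) : hatFn x (k + 1) t = 0 := by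
  simp only [hatFn, Nat.add_sub_cancel]
  split_ifs with hl hr
  · rw [le_antisymm ht hl.1, sub_self, zero_div]
  · linarith [hr.1]
  · rfl

lemma hatFn_succ_of_ge (h₂ : x (k + 1) < x (k + 2)) (ht : x (k + 2) ≤ t) :
    hatFn x (k + 1) t = 0 := by
  simp only [hatFn, Nat.add_sub_cancel]
  split_ifs with hl hr
  · linarith [hl.2]
  · rw [le_antisymm hr.2 ht, sub_self, zero_div]
  · rfl

lemma hatFn_succ_of_mem_left (ht : t ∈ Icc (x k) (x (k + 1))) :
    hatFn x (k + 1) t = (t - x k) / (x (k + 1) - x k) := by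
  simp only [hatFn, Nat.add_sub_cancel, if_pos (show _ ∧ _ from ht)]

lemma hatFn_succ_of_mem_right (h₁ : x k < x (k + 1)) (h₂ : x (k + 1) < x (k + 2))
    (ht : t ∈ Icc (x (k + 1)) (x (k + 2))) :
    hatFn x (k + 1) t = (x (k + 2) - t) / (x (k + 2) - x (k + 1)) := by
  simp only [hatFn, Nat.add_sub_cancel]
  split_ifs with hl hr
  · rw [le_antisymm hl.2 ht.1, div_self (sub_ne_zero.mpr h₁.ne'),
      div_self (sub_ne_zero.mpr h₂.ne')]
  · rfl
  · exact absurd ht hr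

end hatFn

lemma integral_mul_hatFn_succ {g : ℝ → ℝ} {x : ℕ → ℝ} {k : ℕ} (h₀ : 0 ≤ x k)
    (h₁ : x k < x (k + 1)) (h₂ : x (k + 1) < x (k + 2)) (h₃ : x (k + 2) ≤ 1)
    (hg : ContinuousOn g (Icc 0 1)) :
    ∫ t in (0 : ℝ)..1, g t * hatFn x (k + 1) t =
      (∫ t in x k..x (k + 1), g t * ((t - x k) / (x (k + 1) - x k))) +
        ∫ t in x (k + 1)..x (k + 2), g t * ((x (k + 2) - t) / (x (k + 2) - x (k + 1))) := by
  set G := fun t => g t * hatFn x (k + 1) t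
  have piece : ∀ {p q : ℝ} {φ : ℝ → ℝ}, 0 ≤ p → p ≤ q → q ≤ 1 → Continuous φ →
      (∀ t ∈ Icc p q, hatFn x (k + 1) t = φ t) →
      IntervalIntegrable G volume p q ∧ ∫ t in p..q, G t = ∫ t in p..q, g t * φ t := by
    intro p q φ hp hpq hq hφ hG
    have hEq : EqOn G (fun t => g t * φ t) (uIcc p q) := by
      rw [uIcc_of_le hpq]
      intro t ht
      simp only [G, hG t ht]
    refine ⟨ContinuousOn.intervalIntegrable ?_, intervalIntegral.integral_congr hEq⟩
    refine ContinuousOn.congr ?_ hEq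
    rw [uIcc_of_le hpq]
    exact (hg.mono (Icc_subset_Icc hp hq)).mul hφ.continuousOn
  obtain ⟨i₀, e₀⟩ := piece le_rfl h₀ (by linarith) continuous_const
    fun t ht => hatFn_succ_of_le h₁ ht.2
  obtain ⟨i₁, e₁⟩ := piece h₀ h₁.le (by linarith) (by fun_prop)
    fun t ht => hatFn_succ_of_mem_left ht
  obtain ⟨i₂, e₂⟩ := piece (by linarith) h₂.le h₃ (by fun_prop)
    fun t ht => hatFn_succ_of_mem_right h₁ h₂ ht
  obtain ⟨i₃, e₃⟩ := piece (by linarith) h₃ le_rfl continuous_const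
    fun t ht => hatFn_succ_of_ge h₂ ht.1
  rw [← intervalIntegral.integral_add_adjacent_intervals i₀ (i₁.trans (i₂.trans i₃)),
    ← intervalIntegral.integral_add_adjacent_intervals i₁ (i₂.trans i₃),
    ← intervalIntegral.integral_add_adjacent_intervals i₂ i₃, e₀, e₁, e₂, e₃]
  simp

lemma integral_neg_secondDeriv_mul_hatFn_succ {u u' u'' : ℝ → ℝ} {x : ℕ → ℝ} {k : ℕ}
    (h₀ : 0 ≤ x k) (h₁ : x k < x (k + 1)) (h₂ : x (k + 1) < x (k + 2)) (h₃ : x (k + 2) ≤ 1)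
    (hu : ∀ t ∈ Icc (0 : ℝ) 1, HasDerivWithinAt u (u' t) (Icc 0 1) t)
    (hu' : ∀ t ∈ Icc (0 : ℝ) 1, HasDerivWithinAt u' (u'' t) (Icc 0 1) t)
    (hu'' : ContinuousOn u'' (Icc 0 1)) :
    ∫ t in (0 : ℝ)..1, -u'' t * hatFn x (k + 1) t =
      nodalSlope x (fun k => u (x k)) k - nodalSlope x (fun k => u (x k)) (k + 1) := by
  have hsub₁ : Icc (x k) (x (k + 1)) ⊆ Icc 0 1 := Icc_subset_Icc h₀ (by linarith)
  have hsub₂ : Icc (x (k + 1)) (x (k + 2)) ⊆ Icc 0 1 := Icc_subset_Icc (by linarith) h₃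
  rw [integral_mul_hatFn_succ (g := fun t => -u'' t) h₀ h₁ h₂ h₃ hu''.neg,
    integral_neg_secondDeriv_mul_affine h₁.le (fun t ht => (hu t (hsub₁ ht)).mono hsub₁)
      (fun t ht => (hu' t (hsub₁ ht)).mono hsub₁) (hu''.mono hsub₁)
      (fun t => ((hasDerivAt_id' t).sub_const (x k)).div_const (x (k + 1) - x k)),
    integral_neg_secondDeriv_mul_affine h₂.le (fun t ht => (hu t (hsub₂ ht)).mono hsub₂)
      (fun t ht => (hu' t (hsub₂ ht)).mono hsub₂) (hu''.mono hsub₂)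
      (fun t => ((hasDerivAt_id' t).const_sub (x (k + 2))).div_const (x (k + 2) - x (k + 1)))]
  have hne₁ : x (k + 1) - x k ≠ 0 := sub_ne_zero.mpr h₁.ne'
  have hne₂ : x (k + 2) - x (k + 1) ≠ 0 := sub_ne_zero.mpr h₂.ne'
  simp only [nodalSlope]
  field_simp
  ring

theorem stmt2_general
    (n : ℕ)
    (x : ℕ → ℝ) (hx0 : x 0 = 0) (hxn : x n = 1)
    (hmono : ∀ i, i < n → x i < x (i + 1))
    (u u' u'' f : ℝ → ℝ)
    (hu1 : ∀ t ∈ Set.Icc (0:ℝ) 1, HasDerivWithinAt u (u' t) (Set.Icc 0 1) t)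
    (hu2 : ∀ t ∈ Set.Icc (0:ℝ) 1, HasDerivWithinAt u' (u'' t) (Set.Icc 0 1) t)
    (hu2c : ContinuousOn u'' (Set.Icc (0:ℝ) 1))
    (hf : ContinuousOn f (Set.Icc (0:ℝ) 1))
    (hode : ∀ t ∈ Set.Ioo (0:ℝ) 1, -u'' t = f t)
    (hubc0 : u 0 = 0) (hubc1 : u 1 = 0)
    (F : Fin (n - 1) → ℝ)
    (hF : ∀ j : Fin (n - 1), F j = ∫ t in (0:ℝ)..1, f t * hatFn x ((j : ℕ) + 1) t) :
    (stiff n x).mulVec (fun j : Fin (n - 1) => u (x ((j : ℕ) + 1))) = F ∧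
      ∀ v : Fin (n - 1) → ℝ, (stiff n x).mulVec v = F →
        v = fun j : Fin (n - 1) => u (x ((j : ℕ) + 1)) := by
  have hxmono : MonotoneOn x (Iic n) := (strictMonoOn_Iic_of_lt_succ hmono).monotoneOn
  have hfu : EqOn f (fun t => -u'' t) (Icc 0 1) :=
    EqOn.of_subset_closure (fun t ht => (hode t ht).symm) hf hu2c.neg Ioo_subset_Icc_self
      (by rw [closure_Ioo zero_ne_one])
  have hsolves : stiff n x *ᵥ (fun j : Fin (n - 1) => u (x (j + 1))) = F := by
    ext i
    have hi := i.isLt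
    have h₀ : 0 ≤ x i :=
      hx0 ▸ hxmono (mem_Iic.mpr (by omega)) (mem_Iic.mpr (by omega)) (by omega)
    have h₃ : x (i + 2) ≤ 1 :=
      hxn ▸ hxmono (mem_Iic.mpr (by omega)) (mem_Iic.mpr le_rfl) (by omega)
    rw [stiff_mulVec_apply n x (fun k => u (x k)) (by simp [hx0, hubc0]) (by simp [hxn, hubc1]),
      hF, ← integral_neg_secondDeriv_mul_hatFn_succ h₀ (hmono i (by omega))
        (hmono (i + 1) (by omega)) h₃ hu1 hu2 hu2c]
    refine intervalIntegral.integral_congr fun t ht => ?_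
    rw [uIcc_of_le zero_le_one] at ht
    simp only [hfu ht]
  exact ⟨hsolves, fun v hv => stiff_mulVec_injective hmono (hv.trans hsolves.symm)⟩

theorem stmt2
    (n : ℕ) (hn : 2 ≤ n)
    (x : ℕ → ℝ) (hx0 : x 0 = 0) (hxn : x n = 1)
    (hmono : ∀ i, i < n → x i < x (i + 1))
    (u u' u'' f : ℝ → ℝ)
    (hu1 : ∀ t ∈ Set.Icc (0:ℝ) 1, HasDerivWithinAt u (u' t) (Set.Icc 0 1) t)
    (hu2 : ∀ t ∈ Set.Icc (0:ℝ) 1, HasDerivWithinAt u' (u'' t) (Set.Icc 0 1) t)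
    (hu2c : ContinuousOn u'' (Set.Icc (0:ℝ) 1))
    (hf : ContinuousOn f (Set.Icc (0:ℝ) 1))
    (hode : ∀ t ∈ Set.Ioo (0:ℝ) 1, -u'' t = f t)
    (hubc0 : u 0 = 0) (hubc1 : u 1 = 0)
    (F : Fin (n - 1) → ℝ)
    (hF : ∀ j : Fin (n - 1), F j = ∫ t in (0:ℝ)..1, f t * hatFn x ((j : ℕ) + 1) t) :
    (stiff n x).mulVec (fun j : Fin (n - 1) => u (x ((j : ℕ) + 1))) = F ∧
      ∀ v : Fin (n - 1) → ℝ, (stiff n x).mulVec v = F →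
        v = fun j : Fin (n - 1) => u (x ((j : ℕ) + 1)) :=
  stmt2_general n x hx0 hxn hmono u u' u'' f hu1 hu2 hu2c hf hode hubc0 hubc1 F hF
end

section
/- Let S be the (n−1)×(n−1) stiffness matrix associated with arbitrary (possibly non-uniformly distributed) nodes 0 = x_0 < x_1 < ⋯ < x_n = 1, and let G̃ be the (n−1)×(n−1) Green matrix with entries G̃_{ij} = G(x_i, x_j). Then S is invertible and S⁻¹ = G̃, i.e., S·G̃ = G̃·S = I. -/
/-- The Green function of `-u'' = f` on `(0,1)` with homogeneous Dirichlet boundary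
conditions: `G(x,s) = s(1-x)` if `s ≤ x` and `G(x,s) = x(1-s)` if `x < s`. -/
noncomputable def greenFn (a s : ℝ) : ℝ :=
  if s ≤ a then s * (1 - a) else a * (1 - s)

/-- The `(n-1) × (n-1)` Green matrix `G̃_{ij} = G(x_i, x_j)` (interior nodes). -/
noncomputable def greenMat (n : ℕ) (x : ℕ → ℝ) :
    Matrix (Fin (n - 1)) (Fin (n - 1)) ℝ := fun i j =>
  greenFn (x ((i : ℕ) + 1)) (x ((j : ℕ) + 1))

/-!
Row `i` of the stiffness matrix acts on the nodal values of a function `f` vanishing at both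
ends as the jump of difference quotients `slope f x_i x_{i+1} - slope f x_{i+1} x_{i+2}`.
For `s` a node, `a ↦ G(a, s)` is affine with slope `1 - s` left of `s` and slope `-s` right of
`s`, so this jump is `1` at the node `s` and `0` elsewhere; hence `S G̃ = 1`.
-/

open Finset

/-- Row `i` of `stiff n x`, indexed by the node number `m = 0, …, n` instead of `Fin (n - 1)`. -/
noncomputable def stiffRow (x : ℕ → ℝ) (i m : ℕ) : ℝ :=
  (if m = i then -(1 / (x (i + 1) - x i)) else 0) +
    (if m = i + 1 then 1 / (x (i + 1) - x i) + 1 / (x (i + 2) - x (i + 1)) else 0) +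
    (if m = i + 2 then -(1 / (x (i + 2) - x (i + 1))) else 0)

lemma stiff_apply_eq_stiffRow (n : ℕ) (x : ℕ → ℝ) (i k : Fin (n - 1)) :
    stiff n x i k = stiffRow x i (k + 1) := by
  unfold stiff stiffRow
  split_ifs <;> first | omega | ring

lemma sum_stiffRow_mul {n : ℕ} (x : ℕ → ℝ) (f : ℝ → ℝ) {i : ℕ} (hi : i + 2 ≤ n) :
    ∑ m ∈ range (n + 1), stiffRow x i m * f (x m) =
      slope f (x i) (x (i + 1)) - slope f (x (i + 1)) (x (i + 2)) := by
  simp only [stiffRow, add_mul, ite_mul, zero_mul, sum_add_distrib, sum_ite_eq', mem_range,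
    show i < n + 1 by omega, show i + 1 < n + 1 by omega, show i + 2 < n + 1 by omega, if_true,
    slope_def_field]
  ring

lemma sum_stiff_mul {n : ℕ} (x : ℕ → ℝ) (f : ℝ → ℝ) (h0 : f (x 0) = 0) (hn : f (x n) = 0)
    (i : Fin (n - 1)) :
    ∑ k, stiff n x i k * f (x (k + 1)) =
      slope f (x i) (x (i + 1)) - slope f (x (i + 1)) (x (i + 2)) := by
  have hi := i.isLt
  have hshift := sum_range_succ' (fun m => stiffRow x i m * f (x m)) (n - 1)
  rw [Nat.sub_add_cancel (by omega)] at hshift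
  rw [← sum_stiffRow_mul (n := n) x f (by omega), sum_range_succ, hshift]
  simp only [stiff_apply_eq_stiffRow, h0, hn, mul_zero, add_zero]
  exact Fin.sum_univ_eq_sum_range (fun k => stiffRow x i (k + 1) * f (x (k + 1))) (n - 1)

lemma greenFn_of_le {a s : ℝ} (h : a ≤ s) : greenFn a s = a * (1 - s) := by
  unfold greenFn
  split_ifs with hs
  · rw [le_antisymm h hs]
  · rfl

lemma greenFn_of_ge {a s : ℝ} (h : s ≤ a) : greenFn a s = s * (1 - a) := by
  simp [greenFn, h]

lemma slope_greenFn_of_le {a b s : ℝ} (hab : a ≠ b) (ha : a ≤ s) (hb : b ≤ s) :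
    slope (greenFn · s) a b = 1 - s := by
  rw [slope_def_field, greenFn_of_le ha, greenFn_of_le hb]
  field_simp [sub_ne_zero.mpr hab.symm]

lemma slope_greenFn_of_ge {a b s : ℝ} (hab : a ≠ b) (ha : s ≤ a) (hb : s ≤ b) :
    slope (greenFn · s) a b = -s := by
  rw [slope_def_field, greenFn_of_ge ha, greenFn_of_ge hb]
  field_simp [sub_ne_zero.mpr hab.symm]
  ring

lemma slope_sub_slope_greenFn {a b c s : ℝ} (hab : a < b) (hbc : b < c)
    (hs : s ≤ a ∨ s = b ∨ c ≤ s) :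
    slope (greenFn · s) a b - slope (greenFn · s) b c = if b = s then 1 else 0 := by
  rcases hs with hs | rfl | hs
  · rw [slope_greenFn_of_ge hab.ne hs (by linarith), slope_greenFn_of_ge hbc.ne (by linarith)
      (by linarith), if_neg (by linarith)]
    ring
  · rw [slope_greenFn_of_le hab.ne hab.le le_rfl, slope_greenFn_of_ge hbc.ne le_rfl hbc.le,
      if_pos rfl]
    ring
  · rw [slope_greenFn_of_le hab.ne (by linarith) (by linarith), slope_greenFn_of_le hbc.ne
      (by linarith) hs, if_neg (by linarith)]
    ring

lemma stiff_mul_greenMat {n : ℕ} {x : ℕ → ℝ} (hx0 : x 0 = 0) (hxn : x n = 1)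
    (hx : StrictMonoOn x (Set.Iic n)) : stiff n x * greenMat n x = 1 := by
  have hle {a b : ℕ} (hab : a ≤ b) (hb : b ≤ n) : x a ≤ x b :=
    hx.monotoneOn (Set.mem_Iic.mpr (hab.trans hb)) (Set.mem_Iic.mpr hb) hab
  have hlt {a b : ℕ} (hab : a < b) (hb : b ≤ n) : x a < x b :=
    hx (Set.mem_Iic.mpr (hab.le.trans hb)) (Set.mem_Iic.mpr hb) hab
  ext i j
  have hi := i.isLt
  have hj := j.isLt
  have hG0 : greenFn (x 0) (x (j + 1)) = 0 := by
    rw [hx0, greenFn_of_le (hx0 ▸ hle (Nat.zero_le _) (by omega)), zero_mul]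
  have hGn : greenFn (x n) (x (j + 1)) = 0 := by
    rw [greenFn_of_ge (hle (by omega) le_rfl), hxn, sub_self, mul_zero]
  have hs : x (j + 1) ≤ x i ∨ x (j + 1) = x (i + 1) ∨ x (i + 2) ≤ x (j + 1) := by
    rcases lt_trichotomy (j : ℕ) i with hji | hji | hji
    · exact Or.inl (hle (by omega) (by omega))
    · exact Or.inr (Or.inl (by rw [hji]))
    · exact Or.inr (Or.inr (hle (by omega) (by omega)))
  have hnode : x (i + 1) = x (j + 1) ↔ i = j := by
    rw [hx.injOn.eq_iff (Set.mem_Iic.mpr (by omega)) (Set.mem_Iic.mpr (by omega)), Fin.ext_iff]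
    omega
  rw [Matrix.mul_apply]
  simp only [greenMat]
  rw [sum_stiff_mul x (greenFn · (x (j + 1))) hG0 hGn i,
    slope_sub_slope_greenFn (hlt (by omega) (by omega)) (hlt (by omega) (by omega)) hs,
    Matrix.one_apply, if_congr hnode rfl rfl]

theorem stmt3_general
    (n : ℕ)
    (x : ℕ → ℝ) (hx0 : x 0 = 0) (hxn : x n = 1)
    (hmono : ∀ i, i < n → x i < x (i + 1)) :
    IsUnit (stiff n x) ∧
      stiff n x * greenMat n x = 1 ∧ greenMat n x * stiff n x = 1 := by
  have hSG := stiff_mul_greenMat hx0 hxn (strictMonoOn_Iic_of_lt_succ hmono)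
  exact ⟨IsUnit.of_mul_eq_one _ hSG, hSG, mul_eq_one_comm.mp hSG⟩

theorem stmt3
    (n : ℕ) (hn : 2 ≤ n)
    (x : ℕ → ℝ) (hx0 : x 0 = 0) (hxn : x n = 1)
    (hmono : ∀ i, i < n → x i < x (i + 1)) :
    IsUnit (stiff n x) ∧
      stiff n x * greenMat n x = 1 ∧ greenMat n x * stiff n x = 1 :=
  stmt3_general n x hx0 hxn hmono
end

section
/- Let f ∈ C²([0,1]) and let u ∈ C²([0,1]) satisfy −u''(x) = f(x) for all x ∈ (0,1) with u(0) = u(1) = 0. Let u^{FD} = (u_1, …, u_{n−1})ᵀ be the unique solution of the finite difference system S u^{FD} = W f̃, where f̃ = (f(x_1), …, f(x_{n−1}))ᵀ. Then max_{1 ≤ j ≤ n−1} |u(x_j) − u_j| ≤ (h²/48)·(4‖f′‖_∞ + ‖f″‖_∞), where h = max_{1 ≤ j ≤ n} h_j and ‖·‖_∞ denotes the maximum of the absolute value over [0,1]. -/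
/-- The `(n-1) × (n-1)` diagonal weight matrix with `W_{jj} = (h_j + h_{j+1})/2`,
where the interior index `j : Fin (n-1)` corresponds to the node `x (j+1)`. -/
noncomputable def weightMat (n : ℕ) (x : ℕ → ℝ) :
    Matrix (Fin (n - 1)) (Fin (n - 1)) ℝ :=
  Matrix.diagonal fun j : Fin (n - 1) => (x ((j : ℕ) + 2) - x (j : ℕ)) / 2

/-
With `G a t = min (t (1 - a)) (a (1 - t))`, the Green's function of `-d²/dt²` on `[0, 1]` with
Dirichlet conditions, `u a = ∫₀¹ G a t f t dt`. Between consecutive nodes `G (x i)` is affine, with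
slope `1 - x i` left of `x i` and `-x i` right of it; since `S` takes differences of consecutive
slopes, `(G (x i) (x k))ᵢₖ` is a left inverse of `S`. Hence `u_j = ∑ₖ G (x j) (x k) W_kk f (x k)`,
which is the composite trapezoidal rule for `t ↦ G (x j) t f t` on the nodes. On either side of
`x j` the integrand is `ℓ f` with `ℓ` affine, `|ℓ| ≤ x j (1 - x j)` and `|ℓ'| = 1 - x j`, resp.
`x j`, so the trapezoidal errors `h³/12 · sup |(ℓ f)''|` of the cells add up to
`h²/12 · x j (1 - x j) (4 ‖f'‖ + ‖f''‖) ≤ h²/48 · (4 ‖f'‖ + ‖f''‖)`.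
-/

open Set MeasureTheory intervalIntegral Matrix

theorem abs_le_iSup_abs {g : ℝ → ℝ} {a b t : ℝ} (hg : ContinuousOn g (Icc a b))
    (ht : t ∈ Icc a b) : |g t| ≤ ⨆ s : Icc a b, |g s| :=
  le_ciSup (f := fun s : Icc a b => |g s|)
    (by simpa only [image_eq_range] using isCompact_Icc.bddAbove_image hg.abs) ⟨t, ht⟩

theorem mem_Icc_zero_one_of_le {n p : ℕ} {x : ℕ → ℝ} (hx : MonotoneOn x (Iic n)) (hx0 : x 0 = 0)
    (hxn : x n = 1) (hp : p ≤ n) : x p ∈ Icc (0 : ℝ) 1 :=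
  ⟨hx0 ▸ hx (mem_Iic.2 (Nat.zero_le n)) (mem_Iic.2 hp) (Nat.zero_le p),
    hxn ▸ hx (mem_Iic.2 hp) (mem_Iic.2 le_rfl) hp⟩

theorem abs_trapezoidal_error_one_le {s : Set ℝ} {a b M : ℝ} {ψ ψ' ψ'' : ℝ → ℝ} (hab : a < b)
    (hs : Icc a b ⊆ s) (hψ : ∀ t ∈ Icc a b, HasDerivWithinAt ψ (ψ' t) s t)
    (hψ' : ∀ t ∈ Icc a b, HasDerivWithinAt ψ' (ψ'' t) s t) (hM : ∀ t ∈ Icc a b, |ψ'' t| ≤ M) :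
    |trapezoidal_error ψ 1 a b| ≤ (b - a) ^ 3 * M / 12 := by
  have hderiv : EqOn (derivWithin ψ (Icc a b)) ψ' (Icc a b) := fun t ht =>
    ((hψ t ht).mono hs).derivWithin (uniqueDiffOn_Icc hab t ht)
  have hbound : ∀ t, |iteratedDerivWithin 2 ψ (Icc a b) t| ≤ M := by
    intro t
    rw [iteratedDerivWithin_succ, iteratedDerivWithin_one]
    by_cases ht : t ∈ Icc a b
    · rw [derivWithin_congr hderiv (hderiv ht),
        ((hψ' t ht).mono hs).derivWithin (uniqueDiffOn_Icc hab t ht)]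
      exact hM t ht
    · rw [derivWithin_zero_of_notMem_closure (by rwa [closure_Icc]), abs_zero]
      exact (abs_nonneg _).trans (hM a (left_mem_Icc.2 hab.le))
  have h := @trapezoidal_error_le ψ a b
  rw [uIcc_of_le hab.le, abs_of_pos (sub_pos.2 hab)] at h
  simpa using h (fun t ht => ((hψ t ht).mono hs).differentiableWithinAt)
    (fun t ht => ((hψ' t ht).mono hs).differentiableWithinAt.congr hderiv (hderiv ht)) hbound
    one_pos

noncomputable def trapezoidSum (x : ℕ → ℝ) (ψ : ℝ → ℝ) (lo hi : ℕ) : ℝ :=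
  ∑ p ∈ Finset.Ico lo hi, trapezoidal_integral ψ 1 (x p) (x (p + 1))

theorem abs_trapezoidSum_sub_integral_le {s : Set ℝ} {x : ℕ → ℝ} {lo hi : ℕ} {H M : ℝ}
    {ψ ψ' ψ'' : ℝ → ℝ} (hlh : lo ≤ hi) (hx : StrictMonoOn x (Icc lo hi))
    (hH : ∀ p ∈ Ico lo hi, x (p + 1) - x p ≤ H) (hs : Icc (x lo) (x hi) ⊆ s)
    (hψ : ∀ t ∈ Icc (x lo) (x hi), HasDerivWithinAt ψ (ψ' t) s t)
    (hψ' : ∀ t ∈ Icc (x lo) (x hi), HasDerivWithinAt ψ' (ψ'' t) s t)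
    (hM : ∀ t ∈ Icc (x lo) (x hi), |ψ'' t| ≤ M) :
    |trapezoidSum x ψ lo hi - ∫ t in x lo..x hi, ψ t| ≤ H ^ 2 * (x hi - x lo) / 12 * M := by
  have hpiece : ∀ p ∈ Ico lo hi,
      x p < x (p + 1) ∧ Icc (x p) (x (p + 1)) ⊆ Icc (x lo) (x hi) := by
    rintro p ⟨h1, h2⟩
    have mem : ∀ q, lo ≤ q → q ≤ hi → q ∈ Icc lo hi := fun q h h' => ⟨h, h'⟩
    exact ⟨hx (mem p h1 h2.le) (mem (p + 1) (by omega) h2) (by omega),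
      Icc_subset_Icc (hx.monotoneOn (mem lo le_rfl hlh) (mem p h1 h2.le) h1)
        (hx.monotoneOn (mem (p + 1) (by omega) h2) (mem hi hlh le_rfl) h2)⟩
  have hψc : ContinuousOn ψ (Icc (x lo) (x hi)) := fun t ht =>
    (hψ t ht).continuousWithinAt.mono hs
  have hint : ∀ p ∈ Ico lo hi, IntervalIntegrable ψ volume (x p) (x (p + 1)) :=
    fun p hp => (hψc.mono (hpiece p hp).2).intervalIntegrable_of_Icc (hpiece p hp).1.le
  rw [← sum_integral_adjacent_intervals_Ico hlh hint, trapezoidSum, ← Finset.sum_sub_distrib]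
  calc |∑ p ∈ Finset.Ico lo hi, trapezoidal_error ψ 1 (x p) (x (p + 1))|
      ≤ ∑ p ∈ Finset.Ico lo hi, (x (p + 1) - x p) ^ 3 * M / 12 := by
        refine (Finset.abs_sum_le_sum_abs _ _).trans (Finset.sum_le_sum fun p hp => ?_)
        obtain ⟨hlt, hsub⟩ := hpiece p (Finset.mem_Ico.1 hp)
        exact abs_trapezoidal_error_one_le hlt (hsub.trans hs) (fun t ht => hψ t (hsub ht))
          (fun t ht => hψ' t (hsub ht)) (fun t ht => hM t (hsub ht))
    _ ≤ ∑ p ∈ Finset.Ico lo hi, H ^ 2 * M / 12 * (x (p + 1) - x p) := by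
        refine Finset.sum_le_sum fun p hp => ?_
        obtain ⟨hlt, hsub⟩ := hpiece p (Finset.mem_Ico.1 hp)
        have hM0 : 0 ≤ M := (abs_nonneg _).trans (hM _ (hsub (left_mem_Icc.2 hlt.le)))
        have hh : (x (p + 1) - x p) ^ 2 ≤ H ^ 2 :=
          pow_le_pow_left₀ (sub_nonneg.2 hlt.le) (hH p (Finset.mem_Ico.1 hp)) 2
        have := mul_le_mul_of_nonneg_right hh (mul_nonneg (sub_nonneg.2 hlt.le) hM0)
        linarith
    _ = H ^ 2 * (x hi - x lo) / 12 * M := by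
        rw [← Finset.mul_sum, Finset.sum_Ico_sub x hlh]
        ring

theorem abs_trapezoidSum_mul_sub_integral_le {s : Set ℝ} {x : ℕ → ℝ} {lo hi : ℕ}
    {H m B F₁ F₂ : ℝ} {ℓ f f' f'' : ℝ → ℝ} (hlh : lo ≤ hi) (hx : StrictMonoOn x (Icc lo hi))
    (hH : ∀ p ∈ Ico lo hi, x (p + 1) - x p ≤ H) (hs : Icc (x lo) (x hi) ⊆ s)
    (hℓ : ∀ t, HasDerivAt ℓ m t) (hB : ∀ t ∈ Icc (x lo) (x hi), |ℓ t| ≤ B)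
    (hf1 : ∀ t ∈ s, HasDerivWithinAt f (f' t) s t) (hf2 : ∀ t ∈ s, HasDerivWithinAt f' (f'' t) s t)
    (hF₁ : ∀ t ∈ s, |f' t| ≤ F₁) (hF₂ : ∀ t ∈ s, |f'' t| ≤ F₂) :
    |trapezoidSum x (fun t => ℓ t * f t) lo hi - ∫ t in x lo..x hi, ℓ t * f t| ≤
      H ^ 2 * (x hi - x lo) / 12 * (2 * |m| * F₁ + B * F₂) := by
  refine abs_trapezoidSum_sub_integral_le hlh hx hH hs
    (ψ' := fun t => m * f t + ℓ t * f' t) (ψ'' := fun t => 2 * m * f' t + ℓ t * f'' t)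
    (fun t ht => (hℓ t).hasDerivWithinAt.mul (hf1 t (hs ht)))
    (fun t ht => ?_) (fun t ht => ?_)
  · exact (((hf1 t (hs ht)).const_mul m).add
      ((hℓ t).hasDerivWithinAt.mul (hf2 t (hs ht)))).congr_deriv (by ring)
  · have hB0 : 0 ≤ B := (abs_nonneg _).trans (hB t ht)
    calc |2 * m * f' t + ℓ t * f'' t| ≤ 2 * |m| * |f' t| + |ℓ t| * |f'' t| := by
          refine (abs_add_le _ _).trans_eq ?_
          rw [abs_mul, abs_mul, abs_mul, abs_two]
      _ ≤ 2 * |m| * F₁ + B * F₂ := by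
          gcongr
          exacts [hF₁ t (hs ht), hB t ht, hF₂ t (hs ht)]

theorem trapezoidSum_add (x : ℕ → ℝ) (ψ : ℝ → ℝ) {lo mid hi : ℕ} (hlm : lo ≤ mid)
    (hmh : mid ≤ hi) : trapezoidSum x ψ lo mid + trapezoidSum x ψ mid hi = trapezoidSum x ψ lo hi :=
  Finset.sum_Ico_consecutive _ hlm hmh

theorem trapezoidSum_congr {x : ℕ → ℝ} {ψ φ : ℝ → ℝ} {lo hi : ℕ}
    (h : ∀ p ∈ Icc lo hi, ψ (x p) = φ (x p)) : trapezoidSum x ψ lo hi = trapezoidSum x φ lo hi := by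
  refine Finset.sum_congr rfl fun p hp => ?_
  obtain ⟨h1, h2⟩ := Finset.mem_Ico.1 hp
  rw [trapezoidal_integral_one, trapezoidal_integral_one, h p ⟨h1, h2.le⟩, h (p + 1) ⟨by omega, h2⟩]

theorem trapezoidSum_eq_sum_interior {x : ℕ → ℝ} {ψ : ℝ → ℝ} {m : ℕ} (h0 : ψ (x 0) = 0)
    (hm : ψ (x (m + 1)) = 0) :
    trapezoidSum x ψ 0 (m + 1) = ∑ k ∈ Finset.range m, (x (k + 2) - x k) / 2 * ψ (x (k + 1)) := by
  simp only [trapezoidSum, trapezoidal_integral_one, mul_add, Finset.sum_add_distrib,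
    ← Finset.range_eq_Ico]
  rw [Finset.sum_range_succ', Finset.sum_range_succ, h0, hm, mul_zero, mul_zero, add_zero,
    add_zero, ← Finset.sum_add_distrib]
  exact Finset.sum_congr rfl fun k _ => by ring

noncomputable def green (a t : ℝ) : ℝ := if t ≤ a then t * (1 - a) else a * (1 - t)

theorem green_of_le {a t : ℝ} (h : t ≤ a) : green a t = t * (1 - a) := if_pos h

theorem green_of_ge {a t : ℝ} (h : a ≤ t) : green a t = a * (1 - t) := by
  unfold green
  split_ifs with h'
  · rw [le_antisymm h' h]
  · rfl

theorem green_representation {u u' u'' f : ℝ → ℝ} {a : ℝ} (ha : a ∈ Icc (0 : ℝ) 1)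
    (hu1 : ∀ t ∈ Icc (0 : ℝ) 1, HasDerivWithinAt u (u' t) (Icc 0 1) t)
    (hu2 : ∀ t ∈ Icc (0 : ℝ) 1, HasDerivWithinAt u' (u'' t) (Icc 0 1) t)
    (hfc : ContinuousOn f (Icc 0 1)) (hode : ∀ t ∈ Ioo (0 : ℝ) 1, -u'' t = f t)
    (hu0 : u 0 = 0) (hu1' : u 1 = 0) :
    u a = (∫ t in (0 : ℝ)..a, t * (1 - a) * f t) + ∫ t in a..1, a * (1 - t) * f t := by
  obtain ⟨ha0, ha1⟩ := ha
  have hderiv : ∀ t ∈ Ioo (0 : ℝ) 1, HasDerivAt u (u' t) t ∧ HasDerivAt u' (u'' t) t :=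
    fun t ht => ⟨(hu1 t (Ioo_subset_Icc_self ht)).hasDerivAt (Icc_mem_nhds ht.1 ht.2),
      (hu2 t (Ioo_subset_Icc_self ht)).hasDerivAt (Icc_mem_nhds ht.1 ht.2)⟩
  have hu : ContinuousOn u (Icc 0 1) := fun t ht => (hu1 t ht).continuousWithinAt
  have hu' : ContinuousOn u' (Icc 0 1) := fun t ht => (hu2 t ht).continuousWithinAt
  have hL : ∫ t in (0 : ℝ)..a, t * (1 - a) * f t =
      (1 - a) * (u a - a * u' a) - (1 - a) * (u 0 - 0 * u' 0) := by
    refine integral_eq_sub_of_hasDerivAt_of_le (f := fun t => (1 - a) * (u t - t * u' t)) ha0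
      ?_ (fun t ht => ?_) ?_
    · exact (by fun_prop : ContinuousOn (fun t => (1 - a) * (u t - t * u' t)) (Icc 0 1)).mono
        (Icc_subset_Icc le_rfl ha1)
    · have ht' : t ∈ Ioo (0 : ℝ) 1 := ⟨ht.1, ht.2.trans_le ha1⟩
      obtain ⟨h1, h2⟩ := hderiv t ht'
      exact ((h1.sub ((hasDerivAt_id' t).mul h2)).const_mul (1 - a)).congr_deriv
        (by rw [← hode t ht']; ring)
    · exact (by fun_prop : ContinuousOn (fun t => t * (1 - a) * f t) (Icc 0 1)).mono
        (Icc_subset_Icc le_rfl ha1) |>.intervalIntegrable_of_Icc ha0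
  have hR : ∫ t in a..1, a * (1 - t) * f t =
      -a * ((1 - 1) * u' 1 + u 1) - -a * ((1 - a) * u' a + u a) := by
    refine integral_eq_sub_of_hasDerivAt_of_le (f := fun t => -a * ((1 - t) * u' t + u t)) ha1
      ?_ (fun t ht => ?_) ?_
    · exact (by fun_prop : ContinuousOn (fun t => -a * ((1 - t) * u' t + u t)) (Icc 0 1)).mono
        (Icc_subset_Icc ha0 le_rfl)
    · have ht' : t ∈ Ioo (0 : ℝ) 1 := ⟨ha0.trans_lt ht.1, ht.2⟩
      obtain ⟨h1, h2⟩ := hderiv t ht'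
      exact ((((hasDerivAt_id' t).const_sub 1).mul h2).add h1).const_mul
        (-a) |>.congr_deriv (by rw [← hode t ht']; ring)
    · exact (by fun_prop : ContinuousOn (fun t => a * (1 - t) * f t) (Icc 0 1)).mono
        (Icc_subset_Icc ha0 le_rfl) |>.intervalIntegrable_of_Icc ha1
  rw [hL, hR, hu0, hu1']
  ring

theorem sum_fin_ite_val_eq {m : ℕ} (c : ℕ) (φ : ℕ → ℝ) :
    ∑ j : Fin m, (if (j : ℕ) = c then φ j else 0) = if c < m then φ c else 0 := by
  simp [Fin.sum_univ_eq_sum_range (fun j => if j = c then φ j else 0)]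

-- `g (x 0) = g (x n) = 0` stands in for the neighbours missing from the first and last rows of `S`.
theorem vecMul_stiff_apply {n : ℕ} {x : ℕ → ℝ} {g : ℝ → ℝ} (hg0 : g (x 0) = 0)
    (hgn : g (x n) = 0) (k : Fin (n - 1)) :
    ((fun j : Fin (n - 1) => g (x (j + 1))) ᵥ* stiff n x) k =
      (g (x (k + 1)) - g (x k)) / (x (k + 1) - x k) -
        (g (x (k + 2)) - g (x (k + 1))) / (x (k + 2) - x (k + 1)) := by
  have hk := k.isLt
  have hterm : ∀ j : Fin (n - 1), g (x (j + 1)) * stiff n x j k =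
      (if (j : ℕ) = k then g (x (j + 1)) else 0) *
          (1 / (x (k + 1) - x k) + 1 / (x (k + 2) - x (k + 1))) -
        (if (j : ℕ) + 1 = k then g (x (j + 1)) else 0) / (x (k + 1) - x k) -
        (if (j : ℕ) = k + 1 then g (x (j + 1)) else 0) / (x (k + 2) - x (k + 1)) := by
    intro j
    unfold stiff
    generalize (j : ℕ) = J
    generalize (k : ℕ) = K
    split_ifs <;> subst_vars <;> first | omega | ring
  have hdiag : ∑ j : Fin (n - 1), (if (j : ℕ) = k then g (x (j + 1)) else 0) = g (x (k + 1)) := by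
    rw [sum_fin_ite_val_eq (k : ℕ) (fun i => g (x (i + 1))), if_pos hk]
  have hsub : ∑ j : Fin (n - 1), (if (j : ℕ) + 1 = k then g (x (j + 1)) else 0) = g (x k) := by
    have h := Finset.sum_range_succ' (fun i => if i = (k : ℕ) then g (x i) else 0) (n - 1)
    simp only [Finset.sum_ite_eq', Finset.mem_range, hg0, ite_self, add_zero] at h
    rw [Fin.sum_univ_eq_sum_range (fun j => if j + 1 = (k : ℕ) then g (x (j + 1)) else 0), ← h,
      if_pos (by omega)]
  have hsup : ∑ j : Fin (n - 1), (if (j : ℕ) = k + 1 then g (x (j + 1)) else 0) =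
      g (x (k + 2)) := by
    rw [sum_fin_ite_val_eq ((k : ℕ) + 1) (fun i => g (x (i + 1)))]
    split_ifs
    · rfl
    · rw [show (k : ℕ) + 2 = n by omega, hgn]
  rw [vecMul, dotProduct, Finset.sum_congr rfl fun j _ => hterm j, Finset.sum_sub_distrib,
    Finset.sum_sub_distrib, ← Finset.sum_mul, ← Finset.sum_div, ← Finset.sum_div, hdiag, hsub,
    hsup]
  ring

theorem green_sub_green {n i p : ℕ} {x : ℕ → ℝ} (hx : MonotoneOn x (Iic n)) (hi : i ≤ n)
    (hp : p < n) :
    green (x i) (x (p + 1)) - green (x i) (x p) =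
      (if p < i then 1 - x i else -x i) * (x (p + 1) - x p) := by
  have mem : ∀ q, q ≤ n → q ∈ Iic n := fun q h => h
  split_ifs with h
  · rw [green_of_le (hx (mem _ hp) (mem i hi) (by omega)),
      green_of_le (hx (mem _ hp.le) (mem i hi) (by omega))]
    ring
  · rw [green_of_ge (hx (mem i hi) (mem _ hp) (by omega)),
      green_of_ge (hx (mem i hi) (mem _ hp.le) (by omega))]
    ring

theorem green_vecMul_stiff {n : ℕ} {x : ℕ → ℝ} (hx : StrictMonoOn x (Iic n)) (hx0 : x 0 = 0)
    (hxn : x n = 1) (i : Fin (n - 1)) :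
    (fun k : Fin (n - 1) => green (x (i + 1)) (x (k + 1))) ᵥ* stiff n x = Pi.single i 1 := by
  have mem : ∀ q, q ≤ n → q ∈ Iic n := fun q h => h
  have hi := i.isLt
  obtain ⟨ha0, ha1⟩ := mem_Icc_zero_one_of_le hx.monotoneOn hx0 hxn (p := i + 1) (by omega)
  ext k
  have hk := k.isLt
  have hslope : ∀ p, p < n → (green (x (i + 1)) (x (p + 1)) - green (x (i + 1)) (x p)) /
      (x (p + 1) - x p) = if p < i + 1 then 1 - x (i + 1) else -x (i + 1) := fun p hp => by
    rw [green_sub_green hx.monotoneOn (by omega) hp,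
      mul_div_cancel_right₀ _ (sub_ne_zero.2 (hx (mem _ hp.le) (mem _ hp) (by omega)).ne')]
  rw [vecMul_stiff_apply (by rw [hx0, green_of_le ha0]; ring) (by rw [hxn, green_of_ge ha1]; ring),
    hslope k (by omega), hslope (k + 1) (by omega)]
  simp only [Pi.single_apply, Fin.ext_iff]
  split_ifs <;> first | omega | ring

theorem eq_green_dotProduct_stiff_mulVec {n : ℕ} {x : ℕ → ℝ} (hx : StrictMonoOn x (Iic n))
    (hx0 : x 0 = 0) (hxn : x n = 1) (v : Fin (n - 1) → ℝ) (i : Fin (n - 1)) :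
    v i = (fun k : Fin (n - 1) => green (x (i + 1)) (x (k + 1))) ⬝ᵥ (stiff n x *ᵥ v) := by
  rw [dotProduct_mulVec, green_vecMul_stiff hx hx0 hxn, single_dotProduct, one_mul]

theorem dotProduct_weightMat_mulVec {n : ℕ} (hn : 1 ≤ n) {x : ℕ → ℝ} {g φ : ℝ → ℝ}
    (hg0 : g (x 0) = 0) (hgn : g (x n) = 0) :
    (fun k : Fin (n - 1) => g (x (k + 1))) ⬝ᵥ (weightMat n x *ᵥ fun k => φ (x (k + 1))) =
      trapezoidSum x (fun t => g t * φ t) 0 n := by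
  obtain ⟨m, rfl⟩ : ∃ m, n = m + 1 := ⟨n - 1, by omega⟩
  rw [trapezoidSum_eq_sum_interior (by rw [hg0, zero_mul]) (by rw [hgn, zero_mul])]
  simp only [dotProduct, weightMat, mulVec_diagonal]
  rw [Fin.sum_univ_eq_sum_range (fun k => g (x (k + 1)) * ((x (k + 2) - x k) / 2 * φ (x (k + 1))))]
  exact Finset.sum_congr (by rw [Nat.add_sub_cancel]) fun k _ => by ring

theorem eq_trapezoidSum_of_stiff_mulVec_eq {n : ℕ} {x : ℕ → ℝ} {f : ℝ → ℝ}
    {v : Fin (n - 1) → ℝ} (hx : StrictMonoOn x (Iic n)) (hx0 : x 0 = 0) (hxn : x n = 1)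
    (hv : stiff n x *ᵥ v = weightMat n x *ᵥ fun k => f (x (k + 1))) (j : Fin (n - 1)) :
    v j = trapezoidSum x (fun t => t * (1 - x (j + 1)) * f t) 0 (j + 1) +
      trapezoidSum x (fun t => x (j + 1) * (1 - t) * f t) (j + 1) n := by
  have hj := j.isLt
  obtain ⟨ha0, ha1⟩ := mem_Icc_zero_one_of_le hx.monotoneOn hx0 hxn (p := j + 1) (by omega)
  rw [eq_green_dotProduct_stiff_mulVec hx hx0 hxn v j, hv,
    dotProduct_weightMat_mulVec (by omega) (by rw [hx0, green_of_le ha0]; ring)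
      (by rw [hxn, green_of_ge ha1]; ring),
    ← trapezoidSum_add _ _ (Nat.zero_le _) (by omega : (j : ℕ) + 1 ≤ n)]
  congr 1 <;> refine trapezoidSum_congr fun p ⟨hp1, hp2⟩ => ?_
  · rw [green_of_le (hx.monotoneOn (mem_Iic.2 (by omega)) (mem_Iic.2 (by omega)) hp2)]
  · rw [green_of_ge (hx.monotoneOn (mem_Iic.2 (by omega)) (mem_Iic.2 hp2) hp1)]

theorem abs_green_integral_sub_trapezoidSum_le {n i : ℕ} {x : ℕ → ℝ} {H F₁ F₂ : ℝ}
    {f f' f'' : ℝ → ℝ} (hx : StrictMonoOn x (Iic n)) (hx0 : x 0 = 0) (hxn : x n = 1)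
    (hH : ∀ p ∈ Ico 0 n, x (p + 1) - x p ≤ H) (hi : i ≤ n)
    (hf1 : ∀ t ∈ Icc (0 : ℝ) 1, HasDerivWithinAt f (f' t) (Icc 0 1) t)
    (hf2 : ∀ t ∈ Icc (0 : ℝ) 1, HasDerivWithinAt f' (f'' t) (Icc 0 1) t)
    (hF₁ : ∀ t ∈ Icc (0 : ℝ) 1, |f' t| ≤ F₁) (hF₂ : ∀ t ∈ Icc (0 : ℝ) 1, |f'' t| ≤ F₂) :
    |(∫ t in (0 : ℝ)..x i, t * (1 - x i) * f t) + (∫ t in x i..1, x i * (1 - t) * f t) -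
        (trapezoidSum x (fun t => t * (1 - x i) * f t) 0 i +
          trapezoidSum x (fun t => x i * (1 - t) * f t) i n)| ≤
      H ^ 2 / 48 * (4 * F₁ + F₂) := by
  obtain ⟨ha0, ha1⟩ := mem_Icc_zero_one_of_le hx.monotoneOn hx0 hxn hi
  have hxon : ∀ lo hi, hi ≤ n → StrictMonoOn x (Icc lo hi) := fun lo hi h =>
    hx.mono (Icc_subset_Iic_self.trans (Iic_subset_Iic.2 h))
  have hL := abs_trapezoidSum_mul_sub_integral_le (Nat.zero_le i) (hxon 0 i hi)
    (fun p hp => hH p ⟨hp.1, hp.2.trans_le hi⟩) (Icc_subset_Icc hx0.ge ha1)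
    (fun t => ((hasDerivAt_id' t).mul_const (1 - x i)).congr_deriv (one_mul _))
    (B := x i * (1 - x i))
    (fun t ht => by
      rw [abs_of_nonneg (mul_nonneg (hx0 ▸ ht.1) (sub_nonneg.2 ha1))]
      exact mul_le_mul_of_nonneg_right ht.2 (sub_nonneg.2 ha1)) hf1 hf2 hF₁ hF₂
  have hR := abs_trapezoidSum_mul_sub_integral_le hi (hxon i n le_rfl)
    (fun p hp => hH p ⟨Nat.zero_le _, hp.2⟩) (Icc_subset_Icc ha0 hxn.le)
    (fun t => (((hasDerivAt_id' t).const_sub 1).const_mul (x i)).congr_deriv (mul_neg_one _))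
    (B := x i * (1 - x i))
    (fun t ht => by
      rw [abs_of_nonneg (mul_nonneg ha0 (sub_nonneg.2 (hxn ▸ ht.2)))]
      exact mul_le_mul_of_nonneg_left (by linarith [ht.1]) ha0) hf1 hf2 hF₁ hF₂
  rw [hx0, abs_of_nonneg (sub_nonneg.2 ha1)] at hL
  rw [hxn, abs_neg, abs_of_nonneg ha0] at hR
  have hF : 0 ≤ 4 * F₁ + F₂ := by
    linarith [hF₁ 0 ⟨le_rfl, zero_le_one⟩, hF₂ 0 ⟨le_rfl, zero_le_one⟩, abs_nonneg (f' 0),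
      abs_nonneg (f'' 0)]
  set a := x i
  set TL := trapezoidSum x (fun t => t * (1 - a) * f t) 0 i
  set TR := trapezoidSum x (fun t => a * (1 - t) * f t) i n
  set IL := ∫ t in (0 : ℝ)..a, t * (1 - a) * f t
  set IR := ∫ t in a..1, a * (1 - t) * f t
  calc |IL + IR - (TL + TR)| = |(TL - IL) + (TR - IR)| := by rw [abs_sub_comm]; congr 1; ring
    _ ≤ |TL - IL| + |TR - IR| := abs_add_le _ _
    _ ≤ _ := add_le_add hL hR
    _ = H ^ 2 / 12 * (a * (1 - a)) * (4 * F₁ + F₂) := by ring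
    _ ≤ H ^ 2 / 12 * (1 / 4) * (4 * F₁ + F₂) := by
        gcongr
        nlinarith [sq_nonneg (2 * a - 1)]
    _ = H ^ 2 / 48 * (4 * F₁ + F₂) := by ring

theorem stmt5
    (n : ℕ) (hn : 2 ≤ n)
    (x : ℕ → ℝ) (hx0 : x 0 = 0) (hxn : x n = 1)
    (hmono : ∀ i, i < n → x i < x (i + 1))
    (f f' f'' : ℝ → ℝ)
    (hf1 : ∀ t ∈ Set.Icc (0:ℝ) 1, HasDerivWithinAt f (f' t) (Set.Icc 0 1) t)
    (hf2 : ∀ t ∈ Set.Icc (0:ℝ) 1, HasDerivWithinAt f' (f'' t) (Set.Icc 0 1) t)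
    (hf2c : ContinuousOn f'' (Set.Icc (0:ℝ) 1))
    (u u' u'' : ℝ → ℝ)
    (hu1 : ∀ t ∈ Set.Icc (0:ℝ) 1, HasDerivWithinAt u (u' t) (Set.Icc 0 1) t)
    (hu2 : ∀ t ∈ Set.Icc (0:ℝ) 1, HasDerivWithinAt u' (u'' t) (Set.Icc 0 1) t)
    (hode : ∀ t ∈ Set.Ioo (0:ℝ) 1, -u'' t = f t)
    (hubc0 : u 0 = 0) (hubc1 : u 1 = 0)
    (uFD : Fin (n - 1) → ℝ)
    (huFD : (stiff n x).mulVec uFD =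
      (weightMat n x).mulVec (fun j : Fin (n - 1) => f (x ((j : ℕ) + 1))))
    (H : ℝ)
    (hH : H = (Finset.Icc 1 n).sup'
      (Finset.nonempty_Icc.mpr (by omega)) (fun j => x j - x (j - 1))) :
    ∀ j : Fin (n - 1),
      |u (x ((j : ℕ) + 1)) - uFD j| ≤
        H ^ 2 / 48 *
          (4 * (⨆ t : Set.Icc (0:ℝ) 1, |f' t|) + ⨆ t : Set.Icc (0:ℝ) 1, |f'' t|) := by
  intro j
  have hj := j.isLt
  have hx : StrictMonoOn x (Iic n) :=
    strictMonoOn_Iic_of_lt_succ fun i hi => by simpa only [Order.succ_eq_add_one] using hmono i hi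
  have hmesh : ∀ p ∈ Ico 0 n, x (p + 1) - x p ≤ H := by
    rintro p ⟨-, hp⟩
    rw [hH]
    exact Finset.le_sup' (fun q => x q - x (q - 1)) (Finset.mem_Icc.2 ⟨by omega, hp⟩)
  have hu := green_representation
    (mem_Icc_zero_one_of_le (p := j + 1) hx.monotoneOn hx0 hxn (by omega)) hu1 hu2
    (fun t ht => (hf1 t ht).continuousWithinAt) hode hubc0 hubc1
  rw [hu, eq_trapezoidSum_of_stiff_mulVec_eq hx hx0 hxn huFD j]
  exact abs_green_integral_sub_trapezoidSum_le hx hx0 hxn hmesh (by omega) hf1 hf2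
    (fun t => abs_le_iSup_abs fun t ht => (hf2 t ht).continuousWithinAt)
    (fun t => abs_le_iSup_abs hf2c)
end

section
/- Let f : [0,1] → ℝ be continuous and f̃ = (f(x_1), …, f(x_{n−1}))ᵀ. Then for every j with 1 ≤ j ≤ n−1, the j-th component of G̃ W f̃ satisfies (G̃ W f̃)_j = x_j(1−x_j)·T_n(φ_{x_j}·f), where T_n is the composite trapezoid rule on the nodes x_0, …, x_n. -/
/-- The scaled Green function `φ_s(x) = x/s` for `x ≤ s` and `(1-x)/(1-s)` for `x > s`. -/
noncomputable def phiS (s : ℝ) : ℝ → ℝ := fun t =>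
  if t ≤ s then t / s else (1 - t) / (1 - s)

/-- The composite trapezoid rule on the nodes `x_0, …, x_n` for a function `θ` with
`θ(0) = θ(1) = 0`: `T_n(θ) = Σ_{i=1}^{n-1} θ(x_i) (h_i + h_{i+1})/2`. -/
noncomputable def ctr (n : ℕ) (x : ℕ → ℝ) (θ : ℝ → ℝ) : ℝ :=
  ∑ i : Fin (n - 1), θ (x ((i : ℕ) + 1)) * ((x ((i : ℕ) + 2) - x (i : ℕ)) / 2)

/-
Off the boundary, `G(a, s) = a (1 - a) φ_a(s)`. Hence term `k` of `(G̃ W f̃)_j` is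
`x_j (1 - x_j) φ_{x_j}(x_k) f(x_k) W_{kk}`, which is term `k` of `x_j (1 - x_j) T_n(φ_{x_j} f)`.
-/

theorem greenFn_eq_mul_phiS {a : ℝ} (ha₀ : a ≠ 0) (ha₁ : a ≠ 1) (s : ℝ) :
    greenFn a s = a * (1 - a) * phiS a s := by
  have ha₁' : 1 - a ≠ 0 := sub_ne_zero.mpr ha₁.symm
  unfold greenFn phiS
  split_ifs <;> field_simp

theorem greenMat_mul_weightMat_mulVec_apply (n : ℕ) (x : ℕ → ℝ) (f : ℝ → ℝ) (j : Fin (n - 1))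
    (h₀ : x ((j : ℕ) + 1) ≠ 0) (h₁ : x ((j : ℕ) + 1) ≠ 1) :
    (greenMat n x * weightMat n x).mulVec (fun i : Fin (n - 1) => f (x ((i : ℕ) + 1))) j =
      x ((j : ℕ) + 1) * (1 - x ((j : ℕ) + 1)) *
        ctr n x (fun t => phiS (x ((j : ℕ) + 1)) t * f t) := by
  simp only [Matrix.mulVec, dotProduct, Matrix.mul_diagonal, greenMat, weightMat, ctr,
    Finset.mul_sum, greenFn_eq_mul_phiS h₀ h₁]
  refine Finset.sum_congr rfl fun k _ => ?_
  ring

theorem stmt9_general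
    (n : ℕ)
    (x : ℕ → ℝ) (hx0 : x 0 = 0) (hxn : x n = 1)
    (hmono : ∀ i, i < n → x i < x (i + 1))
    (f : ℝ → ℝ) :
    ∀ j : Fin (n - 1),
      (greenMat n x * weightMat n x).mulVec
          (fun i : Fin (n - 1) => f (x ((i : ℕ) + 1))) j =
        x ((j : ℕ) + 1) * (1 - x ((j : ℕ) + 1)) *
          ctr n x (fun t => phiS (x ((j : ℕ) + 1)) t * f t) := by
  intro j
  have hx : StrictMonoOn x (Set.Iic n) := strictMonoOn_Iic_of_lt_succ hmono
  have hj : (j : ℕ) + 1 < n := by omega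
  have hpos : 0 < x ((j : ℕ) + 1) :=
    hx0 ▸ hx (Set.mem_Iic.mpr n.zero_le) (Set.mem_Iic.mpr hj.le) (Nat.succ_pos _)
  have hlt : x ((j : ℕ) + 1) < 1 := hxn ▸ hx (Set.mem_Iic.mpr hj.le) Set.self_mem_Iic hj
  exact greenMat_mul_weightMat_mulVec_apply n x f j hpos.ne' hlt.ne

theorem stmt9
    (n : ℕ) (hn : 2 ≤ n)
    (x : ℕ → ℝ) (hx0 : x 0 = 0) (hxn : x n = 1)
    (hmono : ∀ i, i < n → x i < x (i + 1))
    (f : ℝ → ℝ) (hf : ContinuousOn f (Set.Icc (0:ℝ) 1)) :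
    ∀ j : Fin (n - 1),
      (greenMat n x * weightMat n x).mulVec
          (fun i : Fin (n - 1) => f (x ((i : ℕ) + 1))) j =
        x ((j : ℕ) + 1) * (1 - x ((j : ℕ) + 1)) *
          ctr n x (fun t => phiS (x ((j : ℕ) + 1)) t * f t) :=
  stmt9_general n x hx0 hxn hmono f
end
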